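/- arXiv:2209.07602 — 5 statements merged into one kernel-verified Lean document; each statement's English description precedes it below -/
import Mathlib

section
/- Let A ∈ F^{d×μ'}, B, C ∈ F^{d×μ} with μ' ≤ μ, over a finite field F = F_{p^n}, with all entries chosen i.i.d. uniformly at random. Let M be the 2d×(μ'+2μ) block matrix [[A, B, 0],[A, 0, C]]. Then the probability that M has rank min{2d, μ'+2μ} tends to 1 as n → ∞. -/
/-!
If `μ' + 2μ ≤ 2d` the stacked matrix `M = [[A, B, 0], [A, 0, C]]` has full rank unless some
nonzero `(x, y, z)` has `A x + B y = 0` and `A x + C z = 0`; otherwise it has full rank unless some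
nonzero `(λ, ν)` has `(λ + ν) A = 0`, `λ B = 0` and `ν C = 0`. For a fixed vector each condition
is linear in `(A, B, C)`, so it holds for a `1 / |range|` fraction of the triples. Sorting the
nonzero vectors into four classes according to which blocks vanish, the range of the linear map
`(A, B, C) ↦ M v` is in each class at least as large as the class itself. Bad vectors come in
lines of `q - 1` nonzero multiples, so the union bound over the four classes bounds the fraction
of rank-deficient triples by `4 / (q - 1)`.
-/

open Matrix Filter Function Finset Fintype

theorem Finset.sum_le_of_card_le_of_mul_le {ι : Type*} {s : Finset ι} {f : ι → ℕ} {k N : ℕ}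
    (hs : #s ≤ k) (hf : ∀ i ∈ s, f i * k ≤ N) : ∑ i ∈ s, f i ≤ N := by
  rcases Nat.eq_zero_or_pos k with rfl | hk
  · simp [card_eq_zero.mp (Nat.le_zero.mp hs)]
  refine Nat.le_of_mul_le_mul_right ?_ hk
  calc (∑ i ∈ s, f i) * k = ∑ i ∈ s, f i * k := sum_mul _ _ _
    _ ≤ #s * N := sum_le_card_nsmul _ _ _ hf
    _ ≤ k * N := Nat.mul_le_mul_right _ hs
    _ = N * k := mul_comm _ _

theorem card_filter_le_card_of_injOn {α β : Type*} [Fintype α] [Fintype β] {p : α → Prop}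
    [DecidablePred p] (f : α → β) (hf : ∀ a b, p a → p b → f a = f b → a = b) :
    #{a | p a} ≤ card β :=
  card_le_card_of_injOn f (fun _ _ => mem_univ _)
    fun a ha b hb => hf a b (mem_filter.mp ha).2 (mem_filter.mp hb).2

theorem card_le_natCard_of_injective_of_mem {β γ : Type*} [Fintype γ] {S : Set β} [Finite S]
    (g : γ → β) (hg : Injective g) (hS : ∀ c, g c ∈ S) : card γ ≤ Nat.card S := by
  rw [← Nat.card_eq_fintype_card]
  exact Nat.card_le_card_of_injective (fun c => ⟨g c, hS c⟩) fun c c' h =>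
    hg (congrArg Subtype.val h)

theorem AddMonoidHom.card_filter_eq_zero_mul_card_range {G H : Type*} [AddGroup G] [Fintype G]
    [AddGroup H] [DecidableEq H] (f : G →+ H) :
    #{g | f g = 0} * Nat.card f.range = card G := by
  have hker : Nat.card f.ker = #{g | f g = 0} := by
    rw [← Fintype.card_subtype, ← Nat.card_eq_fintype_card]
    exact Nat.card_congr (Equiv.subtypeEquivRight fun g => f.mem_ker)
  rw [← Nat.card_eq_fintype_card, ← f.ker.card_mul_index, AddSubgroup.index_ker, hker]

theorem Matrix.exists_mulVec_eq_of_ne_zero {R m n : Type*} [Field R] [Fintype n]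
    {x : n → R} (hx : x ≠ 0) (w : m → R) : ∃ A : Matrix m n R, A *ᵥ x = w := by
  classical
  obtain ⟨j, hj⟩ : ∃ j, x j ≠ 0 := by simpa [funext_iff] using hx
  refine ⟨vecMulVec w (Pi.single j (x j)⁻¹), ?_⟩
  rw [vecMulVec_mulVec, single_dotProduct, inv_mul_cancel₀ hj, MulOpposite.op_one, one_smul]

theorem Matrix.exists_vecMul_eq_of_ne_zero {R m n : Type*} [Field R] [Fintype m]
    {x : m → R} (hx : x ≠ 0) (w : n → R) : ∃ A : Matrix m n R, x ᵥ* A = w := by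
  obtain ⟨A, hA⟩ := exists_mulVec_eq_of_ne_zero hx w
  exact ⟨Aᵀ, by rw [← mulVec_transpose, transpose_transpose, hA]⟩

theorem Matrix.rank_eq_card_width_of_mulVec_eq_zero {R m n : Type*} [Field R] [Fintype n]
    {M : Matrix m n R} (h : ∀ v, M *ᵥ v = 0 → v = 0) : M.rank = card n := by
  rw [rank, LinearMap.finrank_range_of_inj, Module.finrank_fintype_fun_eq_card]
  exact (injective_iff_map_eq_zero _).mpr h

theorem Matrix.rank_eq_card_height_of_vecMul_eq_zero {R m n : Type*} [Field R] [Fintype m]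
    [Fintype n] {M : Matrix m n R} (h : ∀ u, u ᵥ* M = 0 → u = 0) : M.rank = card m := by
  rw [← rank_transpose]
  exact rank_eq_card_width_of_mulVec_eq_zero fun u hu => h u (by rwa [← mulVec_transpose])

section ProjectiveUnionBound

variable {F Ω V W : Type*} [Field F] [Fintype F] [AddCommGroup V] [Module F V] [Fintype V]
  [DecidableEq V]

theorem card_sub_one_mul_card_le_sum [Fintype Ω] (P : Ω → V → Prop) [∀ ω v, Decidable (P ω v)]
    (hP : ∀ ω v (a : F), a ≠ 0 → P ω v → P ω (a • v)) :
    (card F - 1) * #{ω | ∃ v ≠ 0, P ω v} ≤ ∑ v with v ≠ 0, #{ω | P ω v} := by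
  have horbit : ∀ ω ∈ ({ω | ∃ v ≠ 0, P ω v} : Finset Ω),
      card F - 1 ≤ #{v | v ≠ 0 ∧ P ω v} := by
    classical
    intro ω hω
    obtain ⟨v, hv, hPv⟩ := (mem_filter.mp hω).2
    calc card F - 1 = #(univ.erase (0 : F)) := by rw [card_erase_of_mem (mem_univ _), card_univ]
      _ ≤ #{v | v ≠ 0 ∧ P ω v} := card_le_card_of_injOn (· • v)
          (fun a ha => by
            have ha : a ≠ 0 := ne_of_mem_erase ha
            simpa [ha, hv] using hP ω v a ha hPv)
          (smul_left_injective F hv).injOn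
  calc (card F - 1) * #{ω | ∃ v ≠ 0, P ω v}
      ≤ ∑ ω with ∃ v ≠ 0, P ω v, #{v | v ≠ 0 ∧ P ω v} := by
        rw [mul_comm, ← smul_eq_mul]; exact card_nsmul_le_sum _ _ _ horbit
    _ ≤ ∑ ω, #{v | v ≠ 0 ∧ P ω v} := sum_le_sum_of_subset (filter_subset _ _)
    _ = ∑ v with v ≠ 0, #{ω | P ω v} := by
        simpa [bipartiteAbove, bipartiteBelow, filter_filter] using
          sum_card_bipartiteAbove_eq_sum_card_bipartiteBelow (s := univ) (t := {v : V | v ≠ 0})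
            (r := P)

variable [AddCommGroup Ω] [Module F Ω] [Fintype Ω] [AddCommGroup W] [Module F W] [DecidableEq W]

theorem card_sub_one_mul_card_exists_le (β : V →ₗ[F] Ω →ₗ[F] W) {s : V → Prop} [DecidablePred s]
    (hs : ∀ v (a : F), a ≠ 0 → s v → s (a • v)) {N : ℕ} (hsN : #{v | s v} ≤ N)
    (hN : ∀ v, s v → v ≠ 0 → N ≤ Nat.card (LinearMap.range (β v))) :
    (card F - 1) * #{ω | ∃ v ≠ 0, s v ∧ β v ω = 0} ≤ card Ω := by
  calc (card F - 1) * #{ω | ∃ v ≠ 0, s v ∧ β v ω = 0}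
      ≤ ∑ v with v ≠ 0, #{ω | s v ∧ β v ω = 0} :=
        card_sub_one_mul_card_le_sum _ fun ω v a ha h => ⟨hs v a ha h.1, by simp [h.2]⟩
    _ = ∑ v with v ≠ 0 ∧ s v, #{ω | β v ω = 0} := by
        rw [sum_filter, sum_filter]
        refine sum_congr rfl fun v _ => ?_
        by_cases hsv : s v <;> simp [hsv]
    _ ≤ card Ω := by
        refine sum_le_of_card_le_of_mul_le ((card_le_card ?_).trans hsN) fun v hv => ?_
        · intro v; simp only [mem_filter, mem_univ, true_and]; exact And.right
        have hv := (mem_filter.mp hv).2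
        have hrange : Nat.card (LinearMap.range (β v)) = Nat.card (β v).toAddMonoidHom.range := by
          rw [← LinearMap.range_toAddSubgroup]; rfl
        rw [← (β v).toAddMonoidHom.card_filter_eq_zero_mul_card_range, ← hrange]
        exact Nat.mul_le_mul_left _ (hN v hv.2 hv.1)

theorem card_sub_one_mul_card_exists_le_of_cover {ι : Type*} [Fintype ι]
    (β : V →ₗ[F] Ω →ₗ[F] W) (s : ι → V → Prop) [∀ i, DecidablePred (s i)]
    (hcover : ∀ v, ∃ i, s i v)
    (hs : ∀ i v (a : F), a ≠ 0 → s i v → s i (a • v)) (N : ι → ℕ)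
    (hsN : ∀ i, #{v | s i v} ≤ N i)
    (hN : ∀ i v, s i v → v ≠ 0 → N i ≤ Nat.card (LinearMap.range (β v))) :
    (card F - 1) * #{ω | ∃ v ≠ 0, β v ω = 0} ≤ card ι * card Ω := by
  classical
  have hsub : ({ω | ∃ v ≠ 0, β v ω = 0} : Finset Ω) ⊆
      univ.biUnion fun i => {ω | ∃ v ≠ 0, s i v ∧ β v ω = 0} := by
    intro ω hω
    obtain ⟨v, hv, hβ⟩ := (mem_filter.mp hω).2
    obtain ⟨i, hi⟩ := hcover v
    simpa using ⟨i, v, hv, hi, hβ⟩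
  calc (card F - 1) * #{ω | ∃ v ≠ 0, β v ω = 0}
      ≤ (card F - 1) * ∑ i, #{ω | ∃ v ≠ 0, s i v ∧ β v ω = 0} :=
        Nat.mul_le_mul_left _ ((card_le_card hsub).trans card_biUnion_le)
    _ = ∑ i, (card F - 1) * #{ω | ∃ v ≠ 0, s i v ∧ β v ω = 0} := mul_sum _ _ _
    _ ≤ ∑ _i : ι, card Ω :=
        sum_le_sum fun i _ => card_sub_one_mul_card_exists_le β (hs i) (hsN i) (hN i)
    _ = card ι * card Ω := by rw [sum_const, card_univ, smul_eq_mul]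

end ProjectiveUnionBound

section StackedMatrix

variable {R m k l : Type*}

def stackedMatrix [Zero R] (A : Matrix m k R) (B C : Matrix m l R) :
    Matrix (m ⊕ m) ((k ⊕ l) ⊕ l) R :=
  fromBlocks (fromCols A B) 0 (fromCols A 0) C

variable [Semiring R]

theorem stackedMatrix_mulVec_sumElim [Fintype k] [Fintype l] (A : Matrix m k R)
    (B C : Matrix m l R) (x : k → R) (y z : l → R) :
    stackedMatrix A B C *ᵥ Sum.elim (Sum.elim x y) z =
      Sum.elim (A *ᵥ x + B *ᵥ y) (A *ᵥ x + C *ᵥ z) := by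
  simp [stackedMatrix, fromBlocks_mulVec]

theorem sumElim_vecMul_stackedMatrix [Fintype m] (A : Matrix m k R) (B C : Matrix m l R)
    (u₁ u₂ : m → R) :
    Sum.elim u₁ u₂ ᵥ* stackedMatrix A B C =
      Sum.elim (Sum.elim ((u₁ + u₂) ᵥ* A) (u₁ ᵥ* B)) (u₂ ᵥ* C) := by
  simp [stackedMatrix, vecMul_fromBlocks, vecMul_fromCols, add_vecMul, ← Sum.elim_add_add]

end StackedMatrix

section Kernels

variable {F m k l : Type*} [Field F]

local notation "Ω" => Matrix m k F × Matrix m l F × Matrix m l F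

section Columns

variable [Fintype k] [Fintype l]

def stackedMulVec : ((k → F) × (l → F) × (l → F)) →ₗ[F] Ω →ₗ[F] (m → F) × (m → F) :=
  LinearMap.mk₂ F (fun v ω => (ω.1 *ᵥ v.1 + ω.2.1 *ᵥ v.2.1, ω.1 *ᵥ v.1 + ω.2.2 *ᵥ v.2.2))
    (fun _ _ _ => by
      simp only [Prod.fst_add, Prod.snd_add, mulVec_add, Prod.mk_add_mk]; congr 1 <;> abel)
    (fun _ _ _ => by simp [mulVec_smul])
    (fun _ _ _ => by
      simp only [Prod.fst_add, Prod.snd_add, add_mulVec, Prod.mk_add_mk]; congr 1 <;> abel)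
    (fun _ _ _ => by simp [smul_mulVec])

@[simp] theorem stackedMulVec_apply (v : (k → F) × (l → F) × (l → F)) (ω : Ω) :
    stackedMulVec v ω = (ω.1 *ᵥ v.1 + ω.2.1 *ᵥ v.2.1, ω.1 *ᵥ v.1 + ω.2.2 *ᵥ v.2.2) := rfl

theorem rank_stackedMatrix_of_stackedMulVec_ne_zero {ω : Ω}
    (h : ∀ v ≠ 0, stackedMulVec v ω ≠ 0) :
    (stackedMatrix ω.1 ω.2.1 ω.2.2).rank = card ((k ⊕ l) ⊕ l) := by
  refine rank_eq_card_width_of_mulVec_eq_zero fun v hv => ?_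
  obtain ⟨x, y, z, rfl⟩ : ∃ x y z, v = Sum.elim (Sum.elim x y) z :=
    ⟨_, _, _, by rw [Sum.elim_comp_inl_inr, Sum.elim_comp_inl_inr]⟩
  rw [stackedMatrix_mulVec_sumElim, ← Sum.elim_zero_zero, Sum.elim_eq_iff] at hv
  obtain ⟨rfl, rfl, rfl⟩ : x = 0 ∧ y = 0 ∧ z = 0 := by
    simpa using not_not.mp fun hne => h (x, y, z) hne (Prod.ext hv.1 hv.2)
  simp

variable {v : (k → F) × (l → F) × (l → F)}

theorem mk_self_mem_range_stackedMulVec (hx : v.1 ≠ 0) (w : m → F) :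
    (w, w) ∈ LinearMap.range (stackedMulVec v) := by
  obtain ⟨A, hA⟩ := exists_mulVec_eq_of_ne_zero hx w
  exact ⟨(A, 0, 0), by simp [hA]⟩

theorem mk_zero_mem_range_stackedMulVec (hy : v.2.1 ≠ 0) (w : m → F) :
    (w, 0) ∈ LinearMap.range (stackedMulVec v) := by
  obtain ⟨B, hB⟩ := exists_mulVec_eq_of_ne_zero hy w
  exact ⟨(0, B, 0), by simp [hB]⟩

theorem zero_mk_mem_range_stackedMulVec (hz : v.2.2 ≠ 0) (w : m → F) :
    (0, w) ∈ LinearMap.range (stackedMulVec v) := by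
  obtain ⟨C, hC⟩ := exists_mulVec_eq_of_ne_zero hz w
  exact ⟨(0, 0, C), by simp [hC]⟩

theorem range_stackedMulVec_eq_top (hyz : v.2 ≠ 0) (hxz : ¬(v.1 = 0 ∧ v.2.2 = 0))
    (hxy : ¬(v.1 = 0 ∧ v.2.1 = 0)) : LinearMap.range (stackedMulVec (m := m) v) = ⊤ := by
  refine eq_top_iff.mpr fun ⟨w₁, w₂⟩ _ => ?_
  by_cases hx : v.1 = 0
  · simpa using add_mem (mk_zero_mem_range_stackedMulVec (fun hy => hxy ⟨hx, hy⟩) w₁)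
      (zero_mk_mem_range_stackedMulVec (fun hz => hxz ⟨hx, hz⟩) w₂)
  by_cases hy : v.2.1 = 0
  · simpa using add_mem (mk_self_mem_range_stackedMulVec hx w₁)
      (zero_mk_mem_range_stackedMulVec (fun hz => hyz (Prod.ext hy hz)) (w₂ - w₁))
  · simpa using add_mem (mk_self_mem_range_stackedMulVec hx w₂)
      (mk_zero_mem_range_stackedMulVec hy (w₁ - w₂))

theorem card_sub_one_mul_card_exists_stackedMulVec_eq_zero_le [Fintype F] [Fintype m]
    [DecidableEq F] [DecidableEq m] [DecidableEq k] [DecidableEq l]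
    (hkl : card k ≤ card l) (hm : card k + 2 * card l ≤ 2 * card m) :
    (card F - 1) * #{ω : Ω | ∃ v ≠ 0, stackedMulVec v ω = 0} ≤ 4 * card Ω := by
  classical
  have hpow {a b : ℕ} (h : a ≤ b) : card F ^ a ≤ card F ^ b :=
    Nat.pow_le_pow_right Fintype.card_pos h
  refine (card_sub_one_mul_card_exists_le_of_cover
    (stackedMulVec (F := F) (m := m) (k := k) (l := l))
    ![fun v : (k → F) × (l → F) × (l → F) => v.2 = 0, fun v => v.1 = 0 ∧ v.2.2 = 0,
      fun v => v.1 = 0 ∧ v.2.1 = 0,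
      fun v => v.2 ≠ 0 ∧ ¬(v.1 = 0 ∧ v.2.2 = 0) ∧ ¬(v.1 = 0 ∧ v.2.1 = 0)] ?_ ?_
    ![card (m → F), card (m → F), card (m → F), card ((m → F) × (m → F))] ?_ ?_).trans_eq
    (by rw [Fintype.card_fin])
  · intro v
    by_cases h₁ : v.2 = 0
    · exact ⟨0, h₁⟩
    by_cases h₂ : v.1 = 0 ∧ v.2.2 = 0
    · exact ⟨1, h₂⟩
    by_cases h₃ : v.1 = 0 ∧ v.2.1 = 0
    · exact ⟨2, h₃⟩
    · exact ⟨3, h₁, h₂, h₃⟩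
  · intro i v a ha
    fin_cases i <;> simp [ha]
  · intro i
    fin_cases i
    · refine (card_filter_le_card_of_injOn Prod.fst fun a b ha hb h =>
        Prod.ext h (ha.trans hb.symm)).trans ?_
      show card (k → F) ≤ card (m → F)
      simpa only [card_fun] using hpow (by omega)
    · refine (card_filter_le_card_of_injOn (·.2.1) fun a b ha hb h =>
        Prod.ext (ha.1.trans hb.1.symm) (Prod.ext h (ha.2.trans hb.2.symm))).trans ?_
      show card (l → F) ≤ card (m → F)
      simpa only [card_fun] using hpow (by omega)
    · refine (card_filter_le_card_of_injOn (·.2.2) fun a b ha hb h =>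
        Prod.ext (ha.1.trans hb.1.symm) (Prod.ext (ha.2.trans hb.2.symm) h)).trans ?_
      show card (l → F) ≤ card (m → F)
      simpa only [card_fun] using hpow (by omega)
    · refine (card_le_univ _).trans ?_
      show card ((k → F) × (l → F) × (l → F)) ≤ card ((m → F) × (m → F))
      simpa only [card_prod, card_fun, ← pow_add] using hpow (by omega)
  · intro i
    fin_cases i
    · intro v (hv : v.2 = 0) hv0
      exact card_le_natCard_of_injective_of_mem (fun w => (w, w))
        (fun a b h => congrArg Prod.fst h)
        (mk_self_mem_range_stackedMulVec fun hx => hv0 (Prod.ext hx hv))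
    · intro v (hv : v.1 = 0 ∧ v.2.2 = 0) hv0
      exact card_le_natCard_of_injective_of_mem (fun w => (w, 0))
        (fun a b h => congrArg Prod.fst h)
        (mk_zero_mem_range_stackedMulVec fun hy => hv0 (Prod.ext hv.1 (Prod.ext hy hv.2)))
    · intro v (hv : v.1 = 0 ∧ v.2.1 = 0) hv0
      exact card_le_natCard_of_injective_of_mem (fun w => (0, w))
        (fun a b h => congrArg Prod.snd h)
        (zero_mk_mem_range_stackedMulVec fun hz => hv0 (Prod.ext hv.1 (Prod.ext hv.2 hz)))
    · intro v ⟨hyz, hxz, hxy⟩ _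
      have htop := range_stackedMulVec_eq_top (m := m) hyz hxz hxy
      exact card_le_natCard_of_injective_of_mem id injective_id fun w => htop ▸ Submodule.mem_top

end Columns

section Rows

variable [Fintype m]

def stackedVecMul : ((m → F) × (m → F)) →ₗ[F] Ω →ₗ[F] (k → F) × (l → F) × (l → F) :=
  LinearMap.mk₂ F (fun u ω => ((u.1 + u.2) ᵥ* ω.1, u.1 ᵥ* ω.2.1, u.2 ᵥ* ω.2.2))
    (fun _ _ _ => by simp [add_vecMul]; abel)
    (fun _ _ _ => by simp [← smul_add, smul_vecMul])
    (fun _ _ _ => by simp [vecMul_add])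
    (fun _ _ _ => by simp [vecMul_smul])

@[simp] theorem stackedVecMul_apply (u : (m → F) × (m → F)) (ω : Ω) :
    stackedVecMul u ω = ((u.1 + u.2) ᵥ* ω.1, u.1 ᵥ* ω.2.1, u.2 ᵥ* ω.2.2) := rfl

theorem rank_stackedMatrix_of_stackedVecMul_ne_zero [Fintype k] [Fintype l] {ω : Ω}
    (h : ∀ u ≠ 0, stackedVecMul u ω ≠ 0) :
    (stackedMatrix ω.1 ω.2.1 ω.2.2).rank = card (m ⊕ m) := by
  refine rank_eq_card_height_of_vecMul_eq_zero fun u hu => ?_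
  obtain ⟨u₁, u₂, rfl⟩ : ∃ u₁ u₂, u = Sum.elim u₁ u₂ := ⟨_, _, (Sum.elim_comp_inl_inr u).symm⟩
  rw [sumElim_vecMul_stackedMatrix, ← Sum.elim_zero_zero, Sum.elim_eq_iff, ← Sum.elim_zero_zero,
    Sum.elim_eq_iff] at hu
  obtain ⟨rfl, rfl⟩ : u₁ = 0 ∧ u₂ = 0 := by
    simpa using not_not.mp fun hne => h (u₁, u₂) hne (Prod.ext hu.1.1 (Prod.ext hu.1.2 hu.2))
  simp

variable {u : (m → F) × (m → F)}

theorem mk_zero_zero_mem_range_stackedVecMul (h : u.1 + u.2 ≠ 0) (w : k → F) :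
    (w, 0, 0) ∈ LinearMap.range (stackedVecMul (l := l) u) := by
  obtain ⟨A, hA⟩ := exists_vecMul_eq_of_ne_zero h w
  exact ⟨(A, 0, 0), by simp [hA]⟩

theorem zero_mk_zero_mem_range_stackedVecMul (h : u.1 ≠ 0) (w : l → F) :
    (0, w, 0) ∈ LinearMap.range (stackedVecMul (k := k) u) := by
  obtain ⟨B, hB⟩ := exists_vecMul_eq_of_ne_zero h w
  exact ⟨(0, B, 0), by simp [hB]⟩

theorem zero_zero_mk_mem_range_stackedVecMul (h : u.2 ≠ 0) (w : l → F) :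
    (0, 0, w) ∈ LinearMap.range (stackedVecMul (k := k) u) := by
  obtain ⟨C, hC⟩ := exists_vecMul_eq_of_ne_zero h w
  exact ⟨(0, 0, C), by simp [hC]⟩

theorem range_stackedVecMul_eq_top (h : u.1 + u.2 ≠ 0) (h₁ : u.1 ≠ 0) (h₂ : u.2 ≠ 0) :
    LinearMap.range (stackedVecMul (k := k) (l := l) u) = ⊤ := by
  refine eq_top_iff.mpr fun ⟨w₁, w₂, w₃⟩ _ => ?_
  simpa using add_mem (mk_zero_zero_mem_range_stackedVecMul h w₁)
    (add_mem (zero_mk_zero_mem_range_stackedVecMul h₁ w₂)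
      (zero_zero_mk_mem_range_stackedVecMul h₂ w₃))

theorem card_sub_one_mul_card_exists_stackedVecMul_eq_zero_le [Fintype F] [Fintype k]
    [Fintype l] [DecidableEq F] [DecidableEq m] [DecidableEq k] [DecidableEq l]
    (hkl : card k ≤ card l) (hm : 2 * card m ≤ card k + 2 * card l) :
    (card F - 1) * #{ω : Ω | ∃ u ≠ 0, stackedVecMul u ω = 0} ≤ 4 * card Ω := by
  classical
  have hpow {a b : ℕ} (h : a ≤ b) : card F ^ a ≤ card F ^ b :=
    Nat.pow_le_pow_right Fintype.card_pos h
  refine (card_sub_one_mul_card_exists_le_of_cover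
    (stackedVecMul (F := F) (m := m) (k := k) (l := l))
    ![fun u : (m → F) × (m → F) => u.1 + u.2 = 0, fun u => u.2 = 0, fun u => u.1 = 0,
      fun u => u.1 + u.2 ≠ 0 ∧ u.1 ≠ 0 ∧ u.2 ≠ 0] ?_ ?_
    ![card ((l → F) × (l → F)), card ((k → F) × (l → F)), card ((k → F) × (l → F)),
      card ((k → F) × (l → F) × (l → F))] ?_ ?_).trans_eq
    (by rw [Fintype.card_fin])
  · intro u
    by_cases h₁ : u.1 + u.2 = 0
    · exact ⟨0, h₁⟩
    by_cases h₂ : u.2 = 0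
    · exact ⟨1, h₂⟩
    by_cases h₃ : u.1 = 0
    · exact ⟨2, h₃⟩
    · exact ⟨3, h₁, h₃, h₂⟩
  · intro i u a ha
    fin_cases i <;> simp [ha, ← smul_add]
  · intro i
    fin_cases i
    · refine (card_filter_le_card_of_injOn Prod.fst fun a b ha hb h => Prod.ext h ?_).trans ?_
      · rw [← neg_eq_of_add_eq_zero_right ha, ← neg_eq_of_add_eq_zero_right hb, h]
      show card (m → F) ≤ card ((l → F) × (l → F))
      simpa only [card_prod, card_fun, ← pow_add] using hpow (by omega)
    · refine (card_filter_le_card_of_injOn Prod.fst fun a b ha hb h =>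
        Prod.ext h (ha.trans hb.symm)).trans ?_
      show card (m → F) ≤ card ((k → F) × (l → F))
      simpa only [card_prod, card_fun, ← pow_add] using hpow (by omega)
    · refine (card_filter_le_card_of_injOn Prod.snd fun a b ha hb h =>
        Prod.ext (ha.trans hb.symm) h).trans ?_
      show card (m → F) ≤ card ((k → F) × (l → F))
      simpa only [card_prod, card_fun, ← pow_add] using hpow (by omega)
    · refine (card_le_univ _).trans ?_
      show card ((m → F) × (m → F)) ≤ card ((k → F) × (l → F) × (l → F))
      simpa only [card_prod, card_fun, ← pow_add] using hpow (by omega)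
  · intro i
    fin_cases i
    · intro u (hu : u.1 + u.2 = 0) hu0
      have h₁ : u.1 ≠ 0 := fun h₁ => hu0 (Prod.ext h₁ (by simpa [h₁] using hu))
      have h₂ : u.2 ≠ 0 := fun h₂ => hu0 (Prod.ext (by simpa [h₂] using hu) h₂)
      refine card_le_natCard_of_injective_of_mem (fun w : (l → F) × (l → F) => (0, w.1, w.2))
        (fun a b h => by simpa [Prod.ext_iff] using h) fun w => ?_
      simpa using add_mem (zero_mk_zero_mem_range_stackedVecMul h₁ w.1)
        (zero_zero_mk_mem_range_stackedVecMul h₂ w.2)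
    · intro u (hu : u.2 = 0) hu0
      have h₁ : u.1 ≠ 0 := fun h₁ => hu0 (Prod.ext h₁ hu)
      refine card_le_natCard_of_injective_of_mem (fun w : (k → F) × (l → F) => (w.1, w.2, 0))
        (fun a b h => by simpa [Prod.ext_iff] using h) fun w => ?_
      simpa using add_mem (mk_zero_zero_mem_range_stackedVecMul (by simpa [hu]) w.1)
        (zero_mk_zero_mem_range_stackedVecMul h₁ w.2)
    · intro u (hu : u.1 = 0) hu0
      have h₂ : u.2 ≠ 0 := fun h₂ => hu0 (Prod.ext hu h₂)
      refine card_le_natCard_of_injective_of_mem (fun w : (k → F) × (l → F) => (w.1, 0, w.2))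
        (fun a b h => by simpa [Prod.ext_iff] using h) fun w => ?_
      simpa using add_mem (mk_zero_zero_mem_range_stackedVecMul (by simpa [hu]) w.1)
        (zero_zero_mk_mem_range_stackedVecMul h₂ w.2)
    · intro u ⟨h, h₁, h₂⟩ _
      have htop := range_stackedVecMul_eq_top (k := k) (l := l) h h₁ h₂
      exact card_le_natCard_of_injective_of_mem id injective_id fun w => htop ▸ Submodule.mem_top

end Rows

variable [Fintype F] [Fintype m] [Fintype k] [Fintype l]

theorem card_sub_one_mul_card_rank_stackedMatrix_ne_le [DecidableEq F] [DecidableEq m]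
    [DecidableEq k] [DecidableEq l] (hkl : card k ≤ card l) :
    (card F - 1) * #{ω : Ω | (stackedMatrix ω.1 ω.2.1 ω.2.2).rank ≠
      min (2 * card m) (card k + 2 * card l)} ≤ 4 * card Ω := by
  rcases le_total (card k + 2 * card l) (2 * card m) with h | h
  · refine le_trans (Nat.mul_le_mul_left _ (card_le_card fun ω => ?_))
      (card_sub_one_mul_card_exists_stackedMulVec_eq_zero_le hkl h)
    simp only [mem_filter, mem_univ, true_and]
    contrapose!
    intro hω
    rw [rank_stackedMatrix_of_stackedMulVec_ne_zero hω, min_eq_right h]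
    simp only [card_sum]; ring
  · refine le_trans (Nat.mul_le_mul_left _ (card_le_card fun ω => ?_))
      (card_sub_one_mul_card_exists_stackedVecMul_eq_zero_le hkl h)
    simp only [mem_filter, mem_univ, true_and]
    contrapose!
    intro hω
    rw [rank_stackedMatrix_of_stackedVecMul_ne_zero hω, min_eq_left h]
    simp only [card_sum]; ring

theorem one_sub_four_div_le_card_rank_stackedMatrix_div (hkl : card k ≤ card l) :
    1 - 4 / ((card F : ℝ) - 1) ≤
      (Nat.card {ω : Ω // (stackedMatrix ω.1 ω.2.1 ω.2.2).rank =
        min (2 * card m) (card k + 2 * card l)} : ℝ) / Nat.card Ω := by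
  classical
  set good : Finset Ω := {ω | (stackedMatrix ω.1 ω.2.1 ω.2.2).rank =
    min (2 * card m) (card k + 2 * card l)}
  set bad : Finset Ω := {ω | (stackedMatrix ω.1 ω.2.1 ω.2.2).rank ≠
    min (2 * card m) (card k + 2 * card l)}
  have hsplit : (#good : ℝ) + #bad = card Ω := by
    exact_mod_cast card_filter_add_card_filter_not (s := univ) _
  have hq : (1 : ℝ) < card F := by exact_mod_cast Fintype.one_lt_card
  have hΩ : (0 : ℝ) < card Ω := by exact_mod_cast Fintype.card_pos
  have hbad : (#bad : ℝ) ≤ 4 * card Ω / (card F - 1) := by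
    rw [le_div_iff₀ (by linarith)]
    have := (Nat.cast_le (α := ℝ)).mpr
      (card_sub_one_mul_card_rank_stackedMatrix_ne_le (F := F) (m := m) hkl)
    push_cast [Nat.cast_sub Fintype.one_lt_card.le] at this
    linarith
  rw [Nat.card_eq_fintype_card, Fintype.card_subtype, Nat.card_eq_fintype_card, le_div_iff₀ hΩ]
  calc (1 - 4 / ((card F : ℝ) - 1)) * card Ω = card Ω - 4 * card Ω / (card F - 1) := by ring
    _ ≤ #good := by linarith

end Kernels

/-- For i.i.d. uniform `A ∈ F^{d×μ'}`, `B, C ∈ F^{d×μ}` over `F_{p^n}` with `μ' ≤ μ`, the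
block matrix `[[A, B, 0], [A, 0, C]]` has rank `min{2d, μ'+2μ}` with probability tending
to `1` as `n → ∞`. -/
theorem stmt2 (p : ℕ) [Fact p.Prime] (d μ' μ : ℕ) (hμ : μ' ≤ μ) :
    Tendsto (fun n : ℕ =>
      (Nat.card {ABC : Matrix (Fin d) (Fin μ') (GaloisField p n) ×
          Matrix (Fin d) (Fin μ) (GaloisField p n) × Matrix (Fin d) (Fin μ) (GaloisField p n) //
          (Matrix.fromBlocks (Matrix.fromCols ABC.1 ABC.2.1) 0
              (Matrix.fromCols ABC.1 0) ABC.2.2).rank = min (2 * d) (μ' + 2 * μ)} : ℝ) /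
        (Nat.card (Matrix (Fin d) (Fin μ') (GaloisField p n) ×
          Matrix (Fin d) (Fin μ) (GaloisField p n) ×
          Matrix (Fin d) (Fin μ) (GaloisField p n)) : ℝ))
      atTop (nhds 1) := by
  have hp : (1 : ℝ) < p := by exact_mod_cast (Fact.out : p.Prime).one_lt
  have hlower : Tendsto (fun n : ℕ => 1 - 4 / ((p : ℝ) ^ n - 1)) atTop (nhds 1) := by
    simpa [sub_eq_add_neg] using tendsto_const_nhds.sub (tendsto_const_nhds.div_atTop
      (tendsto_atTop_add_const_right _ (-1) (tendsto_pow_atTop_atTop_of_one_lt hp)))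
  refine tendsto_of_tendsto_of_tendsto_of_le_of_le' hlower tendsto_const_nhds ?_
    (Eventually.of_forall fun n => div_le_one_of_le₀ ?_ (Nat.cast_nonneg _))
  · filter_upwards [eventually_ne_atTop 0] with n hn
    let := Fintype.ofFinite (GaloisField p n)
    have hq : (Fintype.card (GaloisField p n) : ℝ) = p ^ n := by
      rw [← Nat.card_eq_fintype_card, GaloisField.card p n hn, Nat.cast_pow]
    simpa [hq, stackedMatrix] using one_sub_four_div_le_card_rank_stackedMatrix_div
      (F := GaloisField p n) (m := Fin d) (k := Fin μ') (l := Fin μ) (by simpa using hμ)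
  · exact_mod_cast Finite.card_subtype_le _
end

section
/- For a square matrix M over a commutative ring, M times its adjugate M* equals det(M) times the identity matrix; consequently, if D = [A, 0]·[A, B1]*·B2 where [A,B1] is a d×d square matrix formed by concatenating A with the first columns B1 of B, then every column of D plus a suitable linear combination of columns of B1 lies in det([A,B1]) times the span of the columns B2, so the column span of D is contained in the column span of B = [B1, B2]. -/
open Matrix

/-- The `F`-linear span of the columns of a matrix. -/
noncomputable def colSpan {F : Type*} [Field F] {m n : Type*} [Fintype m] [Fintype n]
    (M : Matrix m n F) : Submodule F (m → F) :=
  Submodule.span F (Set.range M.transpose)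

/-! Since `[A, 0] + [0, B1] = N`, we get `D + [0, B1] N* B2 = N N* B2 = det N • B2`. Hence each
column of `D` is `det N` times a column of `B2` minus a combination of columns of `B1`. -/

theorem fromCols_zero_add_fromCols_zero {R m n₁ n₂ : Type*} [AddZeroClass R]
    (M₁ : Matrix m n₁ R) (M₂ : Matrix m n₂ R) : fromCols M₁ 0 + fromCols 0 M₂ = fromCols M₁ M₂ := by
  ext i (j | j) <;> simp

section colSpan

variable {F : Type*} [Field F] {m n p : Type*} [Fintype m] [Fintype n] [Fintype p]

theorem colSpan_eq_range_mulVecLin (M : Matrix m n F) :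
    colSpan M = LinearMap.range M.mulVecLin :=
  (range_mulVecLin M).symm

theorem colSpan_mul_le (M : Matrix m n F) (N : Matrix n p F) : colSpan (M * N) ≤ colSpan M := by
  simp only [colSpan_eq_range_mulVecLin, mulVecLin_mul]
  exact LinearMap.range_comp_le_range _ _

theorem colSpan_smul_le (c : F) (M : Matrix m n F) : colSpan (c • M) ≤ colSpan M := by
  have : (c • M).mulVecLin = c • M.mulVecLin := LinearMap.ext fun v => smul_mulVec c M v
  rw [colSpan_eq_range_mulVecLin, colSpan_eq_range_mulVecLin, this]
  exact LinearMap.range_smul_le_range _ _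

theorem colSpan_sub_le (M N : Matrix m n F) : colSpan (M - N) ≤ colSpan M ⊔ colSpan N := by
  have : (M - N).mulVecLin = M.mulVecLin + -N.mulVecLin :=
    LinearMap.ext fun v => by simp [sub_eq_add_neg]
  simp only [colSpan_eq_range_mulVecLin, this]
  exact (LinearMap.range_add_le _ _).trans_eq (by rw [LinearMap.range_neg])

@[simp]
theorem colSpan_zero : colSpan (0 : Matrix m n F) = ⊥ := by
  simp [colSpan_eq_range_mulVecLin]

theorem colSpan_submatrix_id_equiv (M : Matrix m n F) (e : p ≃ n) :
    colSpan (M.submatrix id e) = colSpan M := by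
  rw [colSpan, colSpan, transpose_submatrix, ← EquivLike.range_comp Mᵀ e]
  rfl

theorem colSpan_fromCols {n₁ n₂ : Type*} [Fintype n₁] [Fintype n₂]
    (M₁ : Matrix m n₁ F) (M₂ : Matrix m n₂ F) :
    colSpan (fromCols M₁ M₂) = colSpan M₁ ⊔ colSpan M₂ := by
  rw [colSpan, colSpan, colSpan, transpose_fromCols, ← Submodule.span_union]
  exact congrArg _ (Set.Sum.elim_range M₁ᵀ M₂ᵀ)

end colSpan

/-- `M · adjugate(M) = det(M) · I`; consequently, with `N = [A, B1]` square (`s + a = d`),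
`Apad = [A, 0]`, `B1pad = [0, B1]` and `D = Apad · N* · B2`, every column of `D` plus the
corresponding linear combination of columns of `B1` equals `det(N)` times the corresponding
column of `B2`, and the column span of `D` is contained in the column span of `B = [B1, B2]`. -/
theorem stmt3 {F : Type*} [Field F] {d s a b : ℕ} (hsa : s + a = d)
    (A : Matrix (Fin d) (Fin s) F) (B1 : Matrix (Fin d) (Fin a) F) (B2 : Matrix (Fin d) (Fin b) F)
    (N Apad B1pad : Matrix (Fin d) (Fin d) F) (D : Matrix (Fin d) (Fin b) F)
    (hN : N = (Matrix.fromCols A B1).submatrix id (finSumFinEquiv.trans (finCongr hsa)).symm)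
    (hApad : Apad = (Matrix.fromCols A (0 : Matrix (Fin d) (Fin a) F)).submatrix id
      (finSumFinEquiv.trans (finCongr hsa)).symm)
    (hB1pad : B1pad = (Matrix.fromCols (0 : Matrix (Fin d) (Fin s) F) B1).submatrix id
      (finSumFinEquiv.trans (finCongr hsa)).symm)
    (hD : D = Apad * N.adjugate * B2) :
    (∀ M : Matrix (Fin d) (Fin d) F, M * M.adjugate = M.det • (1 : Matrix (Fin d) (Fin d) F)) ∧
    D + B1pad * N.adjugate * B2 = N.det • B2 ∧
    colSpan D ≤ colSpan (Matrix.fromCols B1 B2) := by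
  have hsplit : Apad + B1pad = N := by
    rw [hApad, hB1pad, hN, ← fromCols_zero_add_fromCols_zero A B1]
    rfl
  have hcol : D + B1pad * N.adjugate * B2 = N.det • B2 := by
    rw [hD, ← Matrix.add_mul, ← Matrix.add_mul, hsplit, mul_adjugate, smul_mul, Matrix.one_mul]
  have hspan : colSpan B1pad = colSpan B1 := by
    rw [hB1pad, colSpan_submatrix_id_equiv, colSpan_fromCols, colSpan_zero, bot_sup_eq]
  refine ⟨mul_adjugate, hcol, ?_⟩
  calc colSpan D = colSpan (N.det • B2 - B1pad * (N.adjugate * B2)) := by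
        rw [← hcol, Matrix.mul_assoc, add_sub_cancel_right]
    _ ≤ colSpan B2 ⊔ colSpan B1 :=
        (colSpan_sub_le _ _).trans <| sup_le_sup (colSpan_smul_le _ _)
          ((colSpan_mul_le _ _).trans_eq hspan)
    _ = colSpan (fromCols B1 B2) := by rw [colSpan_fromCols, sup_comm]
end

section
/- Define for positive integers K, d, m, m' with m+m' < d ≤ K(m+m') the generic cost Δ_g = m·d/(m+m') and the baseline cost Δ_base = min{d − m', K·m}. Then for every such (d,m,m'), Δ_base/Δ_g ≤ K, and taking d = K·m + m' and m = 1, one has lim_{m'→∞} Δ_base/Δ_g = lim_{m'→∞} K(1+m')/(K+m') = K. -/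
open Filter

/-- For `m+m' < d ≤ K(m+m')`, with `Δ_g = m·d/(m+m')` and `Δ_base = min{d−m', K·m}`,
the gain `Δ_base/Δ_g` is at most `K`; moreover taking `d = K·m + m'` with `m = 1`
(so `d = K + m'`), the gain equals `K(1+m')/(K+m')`, which tends to `K` as `m' → ∞`. -/
theorem stmt11 (K : ℕ) (hK : 0 < K) :
    (∀ d m m' : ℕ, 0 < m → 0 < m' → m + m' < d → d ≤ K * (m + m') →
      (min ((d : ℝ) - m') ((K : ℝ) * m)) / ((m : ℝ) * d / ((m : ℝ) + m')) ≤ (K : ℝ)) ∧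
    (∀ m' : ℕ, 0 < m' →
      (min (((K + m' : ℕ) : ℝ) - m') ((K : ℝ) * 1)) /
          ((1 : ℝ) * ((K + m' : ℕ) : ℝ) / ((1 : ℝ) + m'))
        = (K : ℝ) * (1 + m') / ((K : ℝ) + m')) ∧
    Tendsto (fun m' : ℕ => (K : ℝ) * (1 + m') / ((K : ℝ) + m')) atTop (nhds (K : ℝ)) := by
  have hK0 : (0 : ℝ) < K := by exact_mod_cast hK
  refine ⟨?_, ?_, ?_⟩
  · intro d m m' hm hm' hlt hle
    have hm0 : (0 : ℝ) < m := by exact_mod_cast hm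
    have hm'0 : (0 : ℝ) < m' := by exact_mod_cast hm'
    have hd0 : (0 : ℝ) < d := by
      have : 0 < d := lt_trans (by positivity) hlt
      exact_mod_cast this
    have hsum : (0 : ℝ) < (m : ℝ) + m' := by positivity
    have hden : (0 : ℝ) < (m : ℝ) * d / ((m : ℝ) + m') := by positivity
    have hmin : (min ((d : ℝ) - m') ((K : ℝ) * m)) ≤ (K : ℝ) * m := min_le_right _ _
    have hsd : (m : ℝ) + m' ≤ d := by
      have : (m + m' : ℕ) ≤ d := le_of_lt hlt
      exact_mod_cast this
    calc (min ((d : ℝ) - m') ((K : ℝ) * m)) / ((m : ℝ) * d / ((m : ℝ) + m'))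
        ≤ ((K : ℝ) * m) / ((m : ℝ) * d / ((m : ℝ) + m')) := by
          gcongr
      _ = (K : ℝ) * (((m : ℝ) + m') / d) := by field_simp
      _ ≤ (K : ℝ) * 1 := by
          apply mul_le_mul_of_nonneg_left _ (le_of_lt hK0)
          exact (div_le_one hd0).mpr hsd
      _ = K := mul_one _
  · intro m' hm'
    have hm'0 : (0 : ℝ) < m' := by exact_mod_cast hm'
    have h1 : (((K + m' : ℕ) : ℝ)) = (K : ℝ) + m' := by push_cast; ring
    rw [h1]
    have hmin : min ((K : ℝ) + m' - m') ((K : ℝ) * 1) = K := by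
      rw [mul_one]; simp
    rw [hmin]
    rw [one_mul, div_div_eq_mul_div]
  · have h : ∀ᶠ m' : ℕ in atTop, (K : ℝ) * (1 + m') / ((K : ℝ) + m')
        = K + ((K : ℝ) - K * K) * ((K : ℝ) + m')⁻¹ := by
      filter_upwards [eventually_gt_atTop 0] with n hn
      have hn0 : (0 : ℝ) < n := by exact_mod_cast hn
      have : (0 : ℝ) < (K : ℝ) + n := by positivity
      field_simp
      ring
    rw [Filter.tendsto_congr' h]
    have hinv : Tendsto (fun n : ℕ => ((K : ℝ) + n)⁻¹) atTop (nhds 0) := by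
      apply Tendsto.inv_tendsto_atTop
      exact tendsto_atTop_add_const_left _ _ tendsto_natCast_atTop_atTop
    have := (tendsto_const_nhds (x := (K:ℝ))).add (hinv.const_mul ((K : ℝ) - K * K))
    simpa using this
end

section
/- Over a finite field F_q, suppose K vectors v_1,…,v_K ∈ F_q^{d} and K vectors v'_1,…,v'_K ∈ F_q^{d} with d = 2K−1 are such that for every k ∈ [K] the d×d matrix M_k = [v'_1,…,v'_K, v_1,…,v_{k−1},v_{k+1},…,v_K] has full rank d. Then there exist nonzero scalars α_1,…,α_{K−1} ∈ F_q and scalars α'_1,…,α'_K ∈ F_q such that v_K = Σ_{k=1}^{K−1} α_k v_k + Σ_{k=1}^{K} α'_k v'_k. -/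
/-- Over a finite field, if `d = 2K−1` and for every `k` the `d` vectors
`v'_1,…,v'_K, (v_j)_{j≠k}` are linearly independent (i.e. the matrix `M_k` has full
rank `d`), then `v_K` is a linear combination of `v_1,…,v_{K−1}` with all-nonzero
coefficients plus a linear combination of `v'_1,…,v'_K`. -/
theorem stmt14 {F : Type*} [Field F] [Fintype F] (K : ℕ) (hK : 2 ≤ K)
    (v v' : Fin K → (Fin (2 * K - 1) → F))
    (hfull : ∀ k : Fin K,
      LinearIndependent F (Sum.elim v' (fun j : {j : Fin K // j ≠ k} => v j.val))) :
    ∃ α α' : Fin K → F,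
      (∀ k : Fin K, (k : ℕ) < K - 1 → α k ≠ 0) ∧
      v ⟨K - 1, by omega⟩ =
        (∑ k ∈ Finset.univ.filter (fun k : Fin K => (k : ℕ) < K - 1), α k • v k) +
          ∑ k : Fin K, α' k • v' k := by
  set k0 : Fin K := ⟨K - 1, by omega⟩ with hk0def
  have hne_iff : ∀ k : Fin K, k ≠ k0 ↔ (k : ℕ) < K - 1 := by
    intro k
    constructor
    · intro h
      have := k.isLt
      rcases lt_or_eq_of_le (Nat.le_sub_one_of_lt k.isLt) with h' | h'
      · exact h'
      · exact absurd (Fin.ext h') h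
    · intro h h'
      rw [h'] at h
      simp [hk0def] at h
  have hcard : Fintype.card (Fin K ⊕ {j : Fin K // j ≠ k0}) =
      Module.finrank F (Fin (2 * K - 1) → F) := by
    rw [Module.finrank_fin_fun]
    rw [Fintype.card_sum, Fintype.card_fin]
    have : Fintype.card {j : Fin K // j ≠ k0} = K - 1 := by
      rw [Fintype.card_subtype]
      rw [show (Finset.univ.filter (· ≠ k0)) = Finset.univ.erase k0 by
        ext t; simp [Finset.mem_erase]]
      rw [Finset.card_erase_of_mem (Finset.mem_univ _), Finset.card_univ, Fintype.card_fin]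
    omega
  haveI : Nonempty (Fin K ⊕ {j : Fin K // j ≠ k0}) := ⟨Sum.inl k0⟩
  let B := basisOfLinearIndependentOfCardEqFinrank (hfull k0) hcard
  have hB : ⇑B = Sum.elim v' (fun j : {j : Fin K // j ≠ k0} => v j.val) :=
    coe_basisOfLinearIndependentOfCardEqFinrank _ _
  set c := B.repr (v k0) with hc
  -- coefficient functions
  set A : Fin K → F := fun t => if h : t = k0 then 1 else c (Sum.inr ⟨t, h⟩) with hA
  have hrepr : v k0 = (∑ i : Fin K, c (Sum.inl i) • v' i) +
      ∑ t ∈ Finset.univ.filter (· ≠ k0), A t • v t := by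
    have h1 := B.sum_repr (v k0)
    rw [← hc] at h1
    rw [Fintype.sum_sum_type] at h1
    have h2 : ∀ t : {j : Fin K // j ≠ k0},
        c (Sum.inr t) • B (Sum.inr t) = A t.val • v t.val := by
      intro t
      rw [hB, hA]
      simp only [Sum.elim_inr]
      rw [dif_neg t.2]
    rw [Finset.sum_congr rfl (fun t _ => h2 t)] at h1
    rw [Finset.sum_subtype (p := fun t : Fin K => t ≠ k0) (Finset.univ.filter (· ≠ k0))
      (by intro x; simp) (fun t => A t • v t)]
    conv_lhs => rw [← h1]
    congr 1
    · apply Finset.sum_congr rfl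
      intro i _
      rw [hB]
      simp
  have hfilter_eq : (Finset.univ.filter (· ≠ k0)) =
      (Finset.univ.filter (fun k : Fin K => (k : ℕ) < K - 1)) := by
    ext t; simp [hne_iff t]
  refine ⟨A, fun i => c (Sum.inl i), ?_, ?_⟩
  · -- nonzeroness
    intro k hk hzero
    have hkne : k ≠ k0 := (hne_iff k).2 hk
    -- use independence at index k
    have hind := (Fintype.linearIndependent_iff).1 (hfull k)
    set g : (Fin K ⊕ {t : Fin K // t ≠ k}) → F :=
      Sum.elim (fun i => c (Sum.inl i))
        (fun t => if h : (t : Fin K) = k0 then -1 else c (Sum.inr ⟨t, h⟩)) with hg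
    have hG : ∀ t : {t : Fin K // t ≠ k}, (t : Fin K) ≠ k0 → g (Sum.inr t) = A t.val := by
      intro t h
      rw [hg, hA]
      simp only [Sum.elim_inr]
      rw [dif_neg h, dif_neg h]
    have hsum : ∑ s, g s • Sum.elim v' (fun t : {t : Fin K // t ≠ k} => v t.val) s = 0 := by
      rw [Fintype.sum_sum_type]
      simp only [Sum.elim_inl, Sum.elim_inr]
      have hsub : ∑ t : {t : Fin K // t ≠ k}, g (Sum.inr t) • v t.val =
          ∑ t ∈ Finset.univ.filter (· ≠ k),
            (if h : t = k0 then (-1 : F) else c (Sum.inr ⟨t, h⟩)) • v t := by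
        rw [Finset.sum_subtype (p := fun t : Fin K => t ≠ k) (Finset.univ.filter (· ≠ k))
          (by intro x; simp)
          (fun t => (if h : t = k0 then (-1 : F) else c (Sum.inr ⟨t, h⟩)) • v t)]
        apply Finset.sum_congr rfl
        intro t _
        rw [hg]
        simp only [Sum.elim_inr]
      rw [hsub]
      have hk0mem : k0 ∈ Finset.univ.filter (· ≠ k) := by simp [Ne.symm hkne]
      rw [← Finset.add_sum_erase _ _ hk0mem]
      rw [dif_pos rfl]
      have herase : (Finset.univ.filter (· ≠ k)).erase k0 =
          (Finset.univ.filter (· ≠ k0)).erase k := by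
        ext t; simp [Finset.mem_erase, and_comm]
      have hrest : ∑ t ∈ (Finset.univ.filter (· ≠ k)).erase k0,
          (if h : t = k0 then (-1 : F) else c (Sum.inr ⟨t, h⟩)) • v t =
          ∑ t ∈ (Finset.univ.filter (· ≠ k0)).erase k, A t • v t := by
        rw [herase]
        apply Finset.sum_congr rfl
        intro t ht
        have ht0 : t ≠ k0 := (Finset.mem_filter.1 (Finset.mem_of_mem_erase ht)).2
        rw [dif_neg ht0, hA]
        simp only
        rw [dif_neg ht0]
      rw [hrest]
      have hAk : A k = 0 := by
        rw [hA]; simp only; rw [dif_neg hkne]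
        rw [hA] at hzero
        simp only at hzero
        rwa [dif_neg hkne] at hzero
      have hfull_sum : ∑ t ∈ Finset.univ.filter (· ≠ k0), A t • v t =
          ∑ t ∈ (Finset.univ.filter (· ≠ k0)).erase k, A t • v t := by
        have hkmem : k ∈ Finset.univ.filter (· ≠ k0) := by simp [hkne]
        rw [← Finset.add_sum_erase _ _ hkmem, hAk, zero_smul, zero_add]
      rw [← hfull_sum]
      rw [neg_one_smul]
      rw [hrepr]
      simp only [hg, Sum.elim_inl]
      abel
    have hcontra := hind g hsum (Sum.inr ⟨k0, Ne.symm hkne⟩)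
    rw [hg] at hcontra
    simp at hcontra
  · rw [hrepr, ← hfilter_eq, add_comm]
end

section
/- Let F be a field, d ≥ 1, and for k ∈ [K] let u_k = [v'_k, v_k] where v'_k ∈ F^{d×m'}, v_k ∈ F^{d×m}. Suppose a random variable x is uniformly distributed on F^{d×L} and S is any random variable such that for each k, H(S, xᵀu_k) = H(S, xᵀv'_k) (decodability). If additionally rank(v'_1) = m' and rank(u_1) = min{d, m+m'}, then H(S) ≥ L·(min{d, m+m'} − m')·log|F|, i.e., the broadcast cost Δ = H(S)/(L·log q) satisfies Δ ≥ min{d, m+m'} − m' in q-ary units. -/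
open Matrix

set_option linter.unusedSectionVars false

section Aux
open Finset
open scoped Classical


lemma negMulLog_sum_le' {ι : Type*} (t : Finset ι) (p : ι → ℝ) (hp : ∀ i ∈ t, 0 ≤ p i) :
    Real.negMulLog (∑ i ∈ t, p i) ≤ ∑ i ∈ t, Real.negMulLog (p i) := by
  have h1 : Real.negMulLog (∑ i ∈ t, p i)
      = ∑ i ∈ t, -(p i * Real.log (∑ j ∈ t, p j)) := by
    rw [Real.negMulLog, neg_mul, Finset.sum_mul, ← Finset.sum_neg_distrib]
  rw [h1]
  apply Finset.sum_le_sum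
  intro i hi
  rw [Real.negMulLog, neg_mul, neg_le_neg_iff]
  rcases eq_or_lt_of_le (hp i hi) with h0 | h0
  · simp [← h0]
  · exact mul_le_mul_of_nonneg_left
      (Real.log_le_log h0 (Finset.single_le_sum hp hi)) (le_of_lt h0)

lemma sum_negMulLog_le' {ι : Type*} (t : Finset ι) (p : ι → ℝ) (hp : ∀ i ∈ t, 0 ≤ p i) :
    ∑ i ∈ t, Real.negMulLog (p i) ≤
      Real.negMulLog (∑ i ∈ t, p i) + (∑ i ∈ t, p i) * Real.log t.card := by
  rcases t.eq_empty_or_nonempty with rfl | ht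
  · simp
  have hN : (0:ℝ) < t.card := by exact_mod_cast Finset.card_pos.2 ht
  set s := ∑ i ∈ t, p i with hsdef
  have hs0 : 0 ≤ s := Finset.sum_nonneg hp
  have jensen : ∑ i ∈ t, (t.card : ℝ)⁻¹ • Real.negMulLog (p i) ≤
      Real.negMulLog (∑ i ∈ t, (t.card : ℝ)⁻¹ • p i) := by
    apply Real.concaveOn_negMulLog.le_map_sum
    · intro i _; positivity
    · simp [Finset.sum_const, nsmul_eq_mul]; field_simp
    · intro i hi; exact Set.mem_Ici.2 (hp i hi)
  have hinner : ∑ i ∈ t, (t.card : ℝ)⁻¹ • p i = (t.card : ℝ)⁻¹ * s := by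
    rw [← Finset.smul_sum, smul_eq_mul]
  have key : Real.negMulLog ((t.card : ℝ)⁻¹ * s) =
      (t.card : ℝ)⁻¹ * (Real.negMulLog s + s * Real.log t.card) := by
    rcases eq_or_lt_of_le hs0 with h0 | hs0'
    · simp [← h0]
    · rw [Real.negMulLog, Real.negMulLog, Real.log_mul (by positivity) (ne_of_gt hs0'),
        Real.log_inv]
      ring
  rw [hinner, key] at jensen
  have hinv : (0:ℝ) < (t.card : ℝ)⁻¹ := by positivity
  have jensen' : (t.card : ℝ)⁻¹ * ∑ i ∈ t, Real.negMulLog (p i) ≤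
      (t.card : ℝ)⁻¹ * (Real.negMulLog s + s * Real.log t.card) := by
    calc (t.card : ℝ)⁻¹ * ∑ i ∈ t, Real.negMulLog (p i)
        = ∑ i ∈ t, (t.card : ℝ)⁻¹ • Real.negMulLog (p i) := by
          rw [← Finset.smul_sum, smul_eq_mul]
      _ ≤ _ := jensen
  exact (mul_le_mul_iff_right₀ hinv).mp jensen'

section fibers
variable {Ω α β γ : Type*} [Fintype Ω] [Fintype α] [Fintype β] [Fintype γ]

lemma fiber_card_eq (X : Ω → α) (a : α) [DecidablePred fun ω => X ω = a] :
    Nat.card {ω : Ω // X ω = a} = (univ.filter fun ω => X ω = a).card := by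
  rw [Nat.card_eq_fintype_card]
  convert Fintype.card_subtype _

lemma sum_fiber_card (X : Ω → α) :
    ∑ a : α, Nat.card {ω : Ω // X ω = a} = Fintype.card Ω := by
  classical
  simp only [fiber_card_eq]
  rw [← Finset.card_univ (α := Ω)]
  exact (Finset.card_eq_sum_card_fiberwise (fun ω _ => Finset.mem_univ (X ω))).symm

lemma fiber_card_comp (h : Ω → γ) (pp : γ → α) (a : α) :
    Nat.card {ω : Ω // pp (h ω) = a}
      = ∑ b : γ, if pp b = a then Nat.card {ω : Ω // h ω = b} else 0 := by
  classical
  simp only [fiber_card_eq]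
  rw [Finset.card_eq_sum_card_fiberwise
    (f := h) (t := univ) (fun ω _ => Finset.mem_univ (h ω))]
  apply Finset.sum_congr rfl
  intro b _
  rw [Finset.filter_filter]
  split
  · rename_i hb
    congr 1
    ext ω
    simp only [Finset.mem_filter, Finset.mem_univ, true_and]
    constructor
    · rintro ⟨-, h2⟩; exact h2
    · intro h2; exact ⟨h2 ▸ hb, h2⟩
  · rename_i hb
    rw [Finset.card_eq_zero]
    ext ω
    simp only [Finset.mem_filter, Finset.mem_univ, true_and, Finset.notMem_empty, iff_false]
    rintro ⟨h1, h2⟩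
    exact hb (h2 ▸ h1)

end fibers

end Aux

/-- Shannon entropy (in nats) of a random variable `X` on a finite sample space `Ω`
equipped with the uniform distribution. -/
noncomputable def uH {Ω α : Type*} [Fintype Ω] [Fintype α] (X : Ω → α) : ℝ :=
  ∑ a : α, Real.negMulLog ((Nat.card {ω : Ω // X ω = a} : ℝ) / (Fintype.card Ω : ℝ))

section Aux2
open Finset
open scoped Classical

section uHlemmas
variable {Ω Ω' α β γ : Type*} [Fintype Ω] [Fintype Ω'] [Fintype α] [Fintype β] [Fintype γ]

lemma uH_comp_le (h : Ω → γ) (pp : γ → α) :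
    uH (fun ω => pp (h ω)) ≤ uH h := by
  unfold uH
  have step : ∀ a : α,
      Real.negMulLog ((Nat.card {ω : Ω // pp (h ω) = a} : ℝ) / (Fintype.card Ω : ℝ))
        ≤ ∑ b : γ, if pp b = a then
            Real.negMulLog ((Nat.card {ω : Ω // h ω = b} : ℝ) / (Fintype.card Ω : ℝ)) else 0 := by
    intro a
    have hsplit : ((Nat.card {ω : Ω // pp (h ω) = a} : ℝ) / (Fintype.card Ω : ℝ))
        = ∑ b : γ, (if pp b = a then
            ((Nat.card {ω : Ω // h ω = b} : ℝ) / (Fintype.card Ω : ℝ)) else 0) := by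
      rw [fiber_card_comp h pp a]
      push_cast
      rw [Finset.sum_div]
      apply Finset.sum_congr rfl
      intro b _
      split <;> simp
    rw [hsplit]
    refine (negMulLog_sum_le' univ _ ?_).trans (le_of_eq ?_)
    · intro b _; split
      · positivity
      · rfl
    · apply Finset.sum_congr rfl
      intro b _
      split <;> simp
  calc ∑ a : α, Real.negMulLog ((Nat.card {ω : Ω // pp (h ω) = a} : ℝ) / (Fintype.card Ω : ℝ))
      ≤ ∑ a : α, ∑ b : γ, if pp b = a then
          Real.negMulLog ((Nat.card {ω : Ω // h ω = b} : ℝ) / (Fintype.card Ω : ℝ)) else 0 :=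
        Finset.sum_le_sum (fun a _ => step a)
    _ = ∑ b : γ, Real.negMulLog ((Nat.card {ω : Ω // h ω = b} : ℝ) / (Fintype.card Ω : ℝ)) := by
        rw [Finset.sum_comm]
        apply Finset.sum_congr rfl
        intro b _
        rw [Finset.sum_ite_eq univ (pp b)]
        simp

lemma fiber_card_fst (X : Ω → α) (Y : Ω → β) (a : α) :
    Nat.card {ω : Ω // X ω = a}
      = ∑ b : β, Nat.card {ω : Ω // (X ω, Y ω) = (a, b)} := by
  have h := fiber_card_comp (fun ω => (X ω, Y ω)) Prod.fst a
  simp only at h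
  rw [h, Fintype.sum_prod_type]
  rw [Finset.sum_comm]
  apply Finset.sum_congr rfl
  intro b _
  rw [Finset.sum_ite_eq' univ a]
  simp

lemma uH_pair_le [Nonempty Ω] (X : Ω → α) (Y : Ω → β) :
    uH (fun ω => (X ω, Y ω)) ≤ uH X + Real.log (Fintype.card β) := by
  have hΩ : (0:ℝ) < (Fintype.card Ω : ℝ) := by exact_mod_cast Fintype.card_pos
  unfold uH
  rw [Fintype.sum_prod_type]
  have step : ∀ a : α,
      ∑ b : β, Real.negMulLog ((Nat.card {ω : Ω // (X ω, Y ω) = (a, b)} : ℝ) / (Fintype.card Ω : ℝ))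
        ≤ Real.negMulLog ((Nat.card {ω : Ω // X ω = a} : ℝ) / (Fintype.card Ω : ℝ))
          + ((Nat.card {ω : Ω // X ω = a} : ℝ) / (Fintype.card Ω : ℝ)) * Real.log (Fintype.card β) := by
    intro a
    have hsum : ((Nat.card {ω : Ω // X ω = a} : ℝ) / (Fintype.card Ω : ℝ))
        = ∑ b : β, ((Nat.card {ω : Ω // (X ω, Y ω) = (a, b)} : ℝ) / (Fintype.card Ω : ℝ)) := by
      rw [fiber_card_fst X Y a]
      push_cast
      rw [Finset.sum_div]
    rw [hsum]
    have := sum_negMulLog_le' (univ : Finset β)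
      (fun b => ((Nat.card {ω : Ω // (X ω, Y ω) = (a, b)} : ℝ) / (Fintype.card Ω : ℝ)))
      (fun b _ => by positivity)
    simpa using this
  calc ∑ a : α, ∑ b : β,
        Real.negMulLog ((Nat.card {ω : Ω // (X ω, Y ω) = (a, b)} : ℝ) / (Fintype.card Ω : ℝ))
      ≤ ∑ a : α, (Real.negMulLog ((Nat.card {ω : Ω // X ω = a} : ℝ) / (Fintype.card Ω : ℝ))
          + ((Nat.card {ω : Ω // X ω = a} : ℝ) / (Fintype.card Ω : ℝ)) * Real.log (Fintype.card β)) :=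
        Finset.sum_le_sum (fun a _ => step a)
    _ = (∑ a : α, Real.negMulLog ((Nat.card {ω : Ω // X ω = a} : ℝ) / (Fintype.card Ω : ℝ)))
          + (∑ a : α, ((Nat.card {ω : Ω // X ω = a} : ℝ) / (Fintype.card Ω : ℝ))) * Real.log (Fintype.card β) := by
        rw [Finset.sum_add_distrib, Finset.sum_mul]
    _ = _ := by
        congr 1
        have h1 : ∑ a : α, ((Nat.card {ω : Ω // X ω = a} : ℝ) / (Fintype.card Ω : ℝ)) = 1 := by
          rw [← Finset.sum_div]
          rw [div_eq_one_iff_eq (ne_of_gt hΩ)]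
          exact_mod_cast sum_fiber_card X
        rw [h1, one_mul]

lemma uH_comp_equiv (e : Ω' ≃ Ω) (X : Ω → α) : uH (fun ω' => X (e ω')) = uH X := by
  unfold uH
  apply Finset.sum_congr rfl
  intro a _
  have h1 : Nat.card {ω' : Ω' // X (e ω') = a} = Nat.card {ω : Ω // X ω = a} :=
    Nat.card_congr (e.subtypeEquiv (fun ω' => Iff.rfl))
  have h2 : Fintype.card Ω' = Fintype.card Ω := Fintype.card_congr e
  rw [h1, h2]

end uHlemmas

lemma uH_addHom {Ω A : Type*} [Fintype Ω] [Fintype A] [AddGroup Ω] [AddGroup A]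
    (f : Ω → A) (hf : ∀ x y, f (x + y) = f x + f y) :
    uH f = Real.log (Nat.card (Set.range f)) := by
  have f0 : f 0 = 0 := by
    have h := hf 0 0
    rw [add_zero] at h
    exact add_eq_left.mp h.symm
  have fsub : ∀ x y, f (x - y) = f x - f y := by
    intro x y
    have h := hf (x - y) y
    rw [sub_add_cancel] at h
    exact eq_sub_of_add_eq h.symm
  set K := Nat.card {ω : Ω // f ω = 0} with hKdef
  have hK : 0 < K := by
    have : Nonempty {ω : Ω // f ω = 0} := ⟨⟨0, f0⟩⟩
    exact Nat.card_pos
  have fiber_eq : ∀ x₀ : Ω, Nat.card {ω : Ω // f ω = f x₀} = K := by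
    intro x₀
    apply Nat.card_congr
    refine ⟨fun ω => ⟨ω.1 - x₀, by rw [fsub, ω.2, sub_self]⟩,
            fun ω => ⟨ω.1 + x₀, by rw [hf, ω.2, zero_add]⟩, ?_, ?_⟩
    · rintro ⟨ω, h⟩; simp
    · rintro ⟨ω, h⟩; simp
  have fiber_zero : ∀ a : A, a ∉ Set.range f → Nat.card {ω : Ω // f ω = a} = 0 := by
    intro a ha
    have : IsEmpty {ω : Ω // f ω = a} := ⟨fun ω => ha ⟨ω.1, ω.2⟩⟩
    simp [Nat.card_of_isEmpty]
  set R := (Set.range f).toFinset with hRdef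
  have hRcard : R.card = Nat.card (Set.range f) := by
    rw [hRdef, Set.toFinset_card, Nat.card_eq_fintype_card]
  have hR : 0 < R.card := by
    rw [hRcard]
    have : Nonempty (Set.range f) := ⟨⟨f 0, ⟨0, rfl⟩⟩⟩
    exact Nat.card_pos
  have hΩ : Fintype.card Ω = R.card * K := by
    rw [← sum_fiber_card f]
    have : ∀ a : A, Nat.card {ω : Ω // f ω = a} = if a ∈ R then K else 0 := by
      intro a
      by_cases ha : a ∈ Set.range f
      · obtain ⟨x₀, rfl⟩ := ha
        simp only [hRdef, Set.mem_toFinset, Set.mem_range]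
        rw [if_pos ⟨x₀, rfl⟩]
        exact fiber_eq x₀
      · rw [fiber_zero a ha, if_neg (by simpa [hRdef] using ha)]
    rw [Finset.sum_congr rfl (fun a _ => this a), Finset.sum_ite_mem, Finset.univ_inter,
      Finset.sum_const, smul_eq_mul]
  have huH : uH f = R.card * Real.negMulLog ((K : ℝ) / (Fintype.card Ω : ℝ)) := by
    unfold uH
    have : ∀ a : A, Real.negMulLog ((Nat.card {ω : Ω // f ω = a} : ℝ) / (Fintype.card Ω : ℝ))
        = if a ∈ R then Real.negMulLog ((K : ℝ) / (Fintype.card Ω : ℝ)) else 0 := by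
      intro a
      by_cases ha : a ∈ Set.range f
      · obtain ⟨x₀, rfl⟩ := ha
        rw [fiber_eq x₀, if_pos (by simp [hRdef])]
      · rw [fiber_zero a ha, if_neg (by simpa [hRdef] using ha)]
        simp
    rw [Finset.sum_congr rfl (fun a _ => this a), Finset.sum_ite_mem, Finset.univ_inter,
      Finset.sum_const, nsmul_eq_mul]
  rw [huH, hΩ, ← hRcard]
  have hK' : ((K : ℕ) : ℝ) ≠ 0 := Nat.cast_ne_zero.mpr hK.ne'
  have hR' : ((R.card : ℕ) : ℝ) ≠ 0 := Nat.cast_ne_zero.mpr hR.ne'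
  push_cast
  have h1 : (K : ℝ) / ((R.card : ℝ) * (K : ℝ)) = ((R.card : ℝ))⁻¹ := by
    field_simp
  rw [h1, Real.negMulLog, Real.log_inv]
  field_simp


lemma card_range_transpose_mul {F : Type*} [Field F] [Fintype F] [DecidableEq F] {d L : ℕ}
    {n : Type*} [Fintype n] [DecidableEq n]
    (M : Matrix (Fin d) n F) :
    Nat.card (Set.range (fun x : Matrix (Fin d) (Fin L) F => x.transpose * M))
      = (Fintype.card F) ^ (L * M.rank) := by
  classical
  set g : (Fin d → F) → (n → F) := fun y => (Mᵀ).mulVecLin y with hg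
  have hZ : (fun x : Matrix (Fin d) (Fin L) F => x.transpose * M)
      = (fun y : Fin L → Fin d → F => Matrix.of (Pi.map (fun _ : Fin L => g) y))
        ∘ (fun x : Matrix (Fin d) (Fin L) F => fun l i => x i l) := by
    funext x
    ext l j
    simp only [Function.comp_apply, Matrix.mul_apply, Matrix.transpose_apply, Matrix.of_apply,
      Pi.map_apply, hg, Matrix.mulVecLin_apply, Matrix.mulVec, dotProduct]
    exact Finset.sum_congr rfl (fun i _ => mul_comm _ _)
  have hsurj : Function.Surjective (fun x : Matrix (Fin d) (Fin L) F => fun l i => x i l) :=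
    fun y => ⟨Matrix.of (fun i l => y l i), rfl⟩
  rw [hZ, hsurj.range_comp]
  have hco : (fun y : Fin L → Fin d → F => Matrix.of (Pi.map (fun _ : Fin L => g) y))
      = (⇑(Matrix.of (m := Fin L) (n := n) (α := F)) ∘ Pi.map (fun _ : Fin L => g)) := rfl
  rw [hco, Set.range_comp]
  rw [Nat.card_image_of_injective (Equiv.injective _)]
  rw [Set.range_piMap]
  rw [Nat.card_congr (Equiv.Set.univPi (fun _ : Fin L => Set.range g))]
  rw [Nat.card_pi]
  have hrg : Nat.card (Set.range g) = (Fintype.card F) ^ M.rank := by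
    have h1 : Set.range g = ↑(LinearMap.range (Mᵀ).mulVecLin) := by
      rw [LinearMap.coe_range]
    rw [h1]
    rw [Nat.card_eq_fintype_card, Module.card_eq_pow_finrank (K := F)]
    congr 1
    rw [← Matrix.rank_transpose M]
    rfl
  simp only [hrg, Finset.prod_const, Finset.card_univ, Fintype.card_fin]
  rw [← pow_mul, mul_comm (M.rank)]

end Aux2

/-- Converse bound: if `x` is uniform on `F^{d×L}`, `S` satisfies the decodability
condition `H(S, xᵀu_k) = H(S, xᵀv'_k)` for every user `k` (where `u_k = [v'_k, v_k]`),
and user `k₀` has `rank(v'_{k₀}) = m'` and `rank(u_{k₀}) = min{d, m+m'}`, then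
`H(S) ≥ L·(min{d, m+m'} − m')·log q`, i.e. the broadcast cost is at least
`min{d, m+m'} − m'` in `q`-ary units. -/
theorem stmt17 {F 𝒮 : Type*} [Field F] [Fintype F] [Fintype 𝒮]
    {K d L m m' : ℕ} (hL : 0 < L)
    (v : Fin K → Matrix (Fin d) (Fin m) F) (v' : Fin K → Matrix (Fin d) (Fin m') F)
    (S : Matrix (Fin d) (Fin L) F → 𝒮)
    (hdec : ∀ k : Fin K,
      uH (fun x : Matrix (Fin d) (Fin L) F =>
          (S x, x.transpose * Matrix.fromCols (v' k) (v k))) =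
        uH (fun x : Matrix (Fin d) (Fin L) F => (S x, x.transpose * v' k)))
    (k₀ : Fin K)
    (hrank' : (v' k₀).rank = m')
    (hrank : (Matrix.fromCols (v' k₀) (v k₀)).rank = min d (m + m')) :
    (L : ℝ) * ((min d (m + m') : ℝ) - (m' : ℝ)) * Real.log (Fintype.card F) ≤ uH S := by
  classical
  set u := Matrix.fromCols (v' k₀) (v k₀) with hu
  set Z := fun x : Matrix (Fin d) (Fin L) F => x.transpose * u with hZdef
  set Y := fun x : Matrix (Fin d) (Fin L) F => x.transpose * v' k₀ with hYdef
  have hadd : ∀ x y : Matrix (Fin d) (Fin L) F, Z (x + y) = Z x + Z y := by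
    intro x y
    simp [hZdef, Matrix.transpose_add, Matrix.add_mul]
  have h1 : uH Z = ((L * min d (m + m') : ℕ) : ℝ) * Real.log (Fintype.card F) := by
    rw [uH_addHom Z hadd]
    rw [hZdef]
    rw [card_range_transpose_mul u, hrank]
    push_cast [Real.log_pow]
    ring
  have h2 : uH Z ≤ uH (fun x => (S x, Z x)) :=
    uH_comp_le (fun x => (S x, Z x)) Prod.snd
  have h3 : uH (fun x => (S x, Z x)) = uH (fun x => (S x, Y x)) := hdec k₀
  have h4 : uH (fun x => (S x, Y x)) ≤ uH S
      + Real.log (Fintype.card (Matrix (Fin L) (Fin m') F)) := uH_pair_le S Y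
  have h5 : Real.log (Fintype.card (Matrix (Fin L) (Fin m') F))
      = ((L * m' : ℕ) : ℝ) * Real.log (Fintype.card F) := by
    have hc : Fintype.card (Matrix (Fin L) (Fin m') F) = Fintype.card F ^ (L * m') := by
      rw [Module.card_eq_pow_finrank (K := F), Module.finrank_matrix]
      simp [Module.finrank_self]
    rw [hc, Nat.cast_pow, Real.log_pow]
  rw [h5] at h4
  have hmain : ((L * min d (m + m') : ℕ) : ℝ) * Real.log (Fintype.card F)
      ≤ uH S + ((L * m' : ℕ) : ℝ) * Real.log (Fintype.card F) := by
    calc ((L * min d (m + m') : ℕ) : ℝ) * Real.log (Fintype.card F) = uH Z := h1.symm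
      _ ≤ uH (fun x => (S x, Z x)) := h2
      _ = uH (fun x => (S x, Y x)) := h3
      _ ≤ _ := h4
  have hcast1 : ((L * min d (m + m') : ℕ) : ℝ) = (L : ℝ) * ((min d (m + m') : ℕ) : ℝ) := by
    push_cast; ring
  have hcast2 : ((L * m' : ℕ) : ℝ) = (L : ℝ) * (m' : ℝ) := by push_cast; ring
  rw [hcast1, hcast2] at hmain
  have hmin : ((d ⊓ (m + m') : ℕ) : ℝ) = (d : ℝ) ⊓ ((m : ℝ) + (m' : ℝ)) := by
    push_cast
    rfl
  rw [hmin] at hmain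
  ring_nf at hmain ⊢
  linarith [hmain]
end
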